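/- arXiv:2207.04628 — 2 statements merged into one kernel-verified Lean document; each statement's English description precedes it below -/
import Mathlib

section
/- Let U be a connected open subset of ℝ^d, and let ℓ_1, ..., ℓ_m : ℝ^d → ℝ be nonzero linear functionals that are positive on U and pairwise non-proportional (no two are collinear over ℝ). Then the functions 1/ℓ_1, ..., 1/ℓ_m restricted to U are linearly independent over ℝ. -/
theorem stmt_6 (d m : ℕ) (U : Set (Fin d → ℝ)) (hUopen : IsOpen U)
    (hUconn : IsConnected U)
    (ℓ : Fin m → ((Fin d → ℝ) →ₗ[ℝ] ℝ))
    (hnz : ∀ j, ℓ j ≠ 0)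
    (hpos : ∀ j, ∀ x ∈ U, 0 < ℓ j x)
    (hnonprop : ∀ i j, i ≠ j → ∀ c : ℝ, ℓ i ≠ c • ℓ j)
    (a : Fin m → ℝ)
    (h : ∀ x ∈ U, (∑ j, a j / ℓ j x) = 0) :
    ∀ j, a j = 0 := by
  classical
  -- The "cleared denominators" function F.
  set F : (Fin d → ℝ) → ℝ :=
    fun x => ∑ j, a j * ∏ k ∈ Finset.univ.erase j, ℓ k x with hF
  -- F is analytic on all of ℝ^d.
  have hanal : AnalyticOnNhd ℝ F Set.univ := by
    apply Finset.analyticOnNhd_fun_sum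
    intro j _
    apply AnalyticOnNhd.mul analyticOnNhd_const
    apply Finset.analyticOnNhd_fun_prod
    intro k _
    intro x _
    have := (LinearMap.toContinuousLinearMap (ℓ k)).analyticAt x
    simpa using this
  -- F vanishes on U.
  have hFU : ∀ x ∈ U, F x = 0 := by
    intro x hx
    have hne : ∀ j, ℓ j x ≠ 0 := fun j => (hpos j x hx).ne'
    have key : ∀ j : Fin m, a j * ∏ k ∈ Finset.univ.erase j, ℓ k x
        = (a j / ℓ j x) * ∏ k, ℓ k x := by
      intro j
      rw [← Finset.mul_prod_erase Finset.univ (fun k => ℓ k x) (Finset.mem_univ j),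
        div_mul_eq_mul_div, eq_div_iff (hne j)]
      ring
    calc F x = ∑ j, (a j / ℓ j x) * ∏ k, ℓ k x := by
          simp only [hF]; exact Finset.sum_congr rfl (fun j _ => key j)
      _ = (∑ j, a j / ℓ j x) * ∏ k, ℓ k x := by rw [Finset.sum_mul]
      _ = 0 := by rw [h x hx, zero_mul]
  -- By analytic continuation, F vanishes everywhere.
  obtain ⟨x₀, hx₀⟩ := hUconn.nonempty
  have hev : F =ᶠ[nhds x₀] 0 := by
    filter_upwards [hUopen.mem_nhds hx₀] with x hx using hFU x hx
  have hFzero : ∀ x, F x = 0 := by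
    have := hanal.eqOn_zero_of_preconnected_of_eventuallyEq_zero
      isPreconnected_univ (Set.mem_univ x₀) hev
    intro x; exact this (Set.mem_univ x)
  -- Now fix j and find a point on ker (ℓ j) avoiding all other kernels.
  intro j
  set V : Submodule ℝ (Fin d → ℝ) := LinearMap.ker (ℓ j) with hV
  set p : {k : Fin m // k ≠ j} → Subspace ℝ V :=
    fun k => Submodule.comap V.subtype (LinearMap.ker (ℓ k.1)) with hp
  have hcover : (⋃ k, (p k : Set V)) ≠ Set.univ := by
    intro hcov
    obtain ⟨k, hk⟩ := Subspace.exists_eq_top_of_iUnion_eq_univ hcov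
    -- then ker (ℓ j) ≤ ker (ℓ k), hence ℓ k is a multiple of ℓ j.
    have hker : LinearMap.ker (ℓ j) ≤ LinearMap.ker (ℓ k.1) := by
      intro y hy
      have : (⟨y, hy⟩ : V) ∈ p k := hk ▸ Submodule.mem_top
      simpa [hp] using this
    have hspan : ℓ k.1 ∈ Submodule.span ℝ (Set.range (fun _ : Unit => ℓ j)) := by
      apply mem_span_of_iInf_ker_le_ker (L := fun _ : Unit => ℓ j)
      simpa [iInf_const] using hker
    rw [Set.range_const, Submodule.mem_span_singleton] at hspan
    obtain ⟨c, hc⟩ := hspan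
    exact hnonprop k.1 j k.2 c hc.symm
  obtain ⟨y, hy⟩ : ∃ y : V, ∀ k, y ∉ p k := by
    rcases Set.ne_univ_iff_exists_notMem _ |>.mp hcover with ⟨y, hy⟩
    exact ⟨y, fun k hk => hy (Set.mem_iUnion.mpr ⟨k, hk⟩)⟩
  -- Evaluate F at y.
  have hjy : ℓ j (y : Fin d → ℝ) = 0 := y.2
  have hky : ∀ k, k ≠ j → ℓ k (y : Fin d → ℝ) ≠ 0 := by
    intro k hk hzero
    exact hy ⟨k, hk⟩ (by simpa [hp] using hzero)
  have hFy : F (y : Fin d → ℝ) = a j * ∏ k ∈ Finset.univ.erase j, ℓ k y := by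
    simp only [hF]
    apply Finset.sum_eq_single
    · intro i _ hij
      have : ℓ j (y : Fin d → ℝ) = 0 := hjy
      rw [Finset.prod_eq_zero (Finset.mem_erase.mpr ⟨(Ne.symm hij), Finset.mem_univ j⟩) this,
        mul_zero]
    · intro hj; exact absurd (Finset.mem_univ j) hj
  have hprod : (∏ k ∈ Finset.univ.erase j, ℓ k (y : Fin d → ℝ)) ≠ 0 := by
    apply Finset.prod_ne_zero_iff.mpr
    intro k hk
    exact hky k (Finset.mem_erase.mp hk).1
  have := hFzero (y : Fin d → ℝ)
  rw [hFy] at this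
  exact (mul_eq_zero.mp this).resolve_right hprod
end

section
/- Let U be a nonempty connected open subset of ℝ^d, let ℓ_1, ..., ℓ_m : ℝ^d → ℝ be linear functionals positive on U and pairwise non-proportional, and let c_1, ..., c_m be nonzero real numbers. Then for each nonzero rational vector (q_1, ..., q_m) ∈ ℚ^m \ {0}, the set {x ∈ U : Σ_j q_j · c_j/ℓ_j(x) = 0} is contained in the zero set of a nonzero polynomial, hence has empty interior; consequently the set of x ∈ U for which c_1/ℓ_1(x), ..., c_m/ℓ_m(x) are linearly independent over ℚ is the complement of a countable union of nowhere dense sets and is dense in U. -/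
open MvPolynomial Finset

/-- The degree-one polynomial associated to a linear functional on `ℝ^d`. -/
noncomputable def linPoly {d : ℕ} (g : (Fin d → ℝ) →ₗ[ℝ] ℝ) : MvPolynomial (Fin d) ℝ :=
  ∑ i, C (g fun j => if i = j then 1 else 0) * X i

lemma eval_linPoly {d : ℕ} (g : (Fin d → ℝ) →ₗ[ℝ] ℝ) (x : Fin d → ℝ) :
    MvPolynomial.eval x (linPoly g) = g x := by
  rw [linPoly, LinearMap.pi_apply_eq_sum_univ g x]
  simp only [map_sum, map_mul, MvPolynomial.eval_C, MvPolynomial.eval_X]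
  exact Finset.sum_congr rfl fun i _ => by rw [smul_eq_mul, mul_comm]

lemma linPoly_ne_zero {d : ℕ} {g : (Fin d → ℝ) →ₗ[ℝ] ℝ} (hg : g ≠ 0) :
    linPoly g ≠ 0 := by
  intro h
  apply hg
  refine LinearMap.ext fun x => ?_
  have := eval_linPoly g x
  rw [h] at this
  simpa using this.symm

/-- The zero set of a nonzero multivariate real polynomial has empty interior. -/
lemma interior_zeroSet_empty {d : ℕ} {p : MvPolynomial (Fin d) ℝ} (hp : p ≠ 0)
    {s : Set (Fin d → ℝ)} (hs : ∀ x ∈ s, MvPolynomial.eval x p = 0) :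
    interior s = ∅ := by
  by_contra h
  obtain ⟨x, hx⟩ := Set.nonempty_iff_ne_empty.2 h
  have han : AnalyticOnNhd ℝ (fun y => MvPolynomial.eval y p) Set.univ :=
    AnalyticOnNhd.eval_continuousLinearMap (ContinuousLinearMap.id ℝ (Fin d → ℝ)) p
  have hev : (fun y => MvPolynomial.eval y p) =ᶠ[nhds x] 0 := by
    filter_upwards [isOpen_interior.mem_nhds hx] with y hy
    exact hs y (interior_subset hy)
  have heq : Set.EqOn (fun y => MvPolynomial.eval y p) 0 Set.univ :=
    han.eqOn_zero_of_preconnected_of_eventuallyEq_zero isPreconnected_univ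
      (Set.mem_univ x) hev
  exact hp (MvPolynomial.funext fun y => by simpa using heq (Set.mem_univ y))

theorem stmt_7 (d m : ℕ) (U : Set (Fin d → ℝ)) (hUopen : IsOpen U)
    (hUne : U.Nonempty) (hUconn : IsConnected U)
    (ℓ : Fin m → ((Fin d → ℝ) →ₗ[ℝ] ℝ))
    (hpos : ∀ j, ∀ x ∈ U, 0 < ℓ j x)
    (hnonprop : ∀ i j, i ≠ j → ∀ c : ℝ, ℓ i ≠ c • ℓ j)
    (c : Fin m → ℝ) (hc : ∀ j, c j ≠ 0) :
    (∀ q : Fin m → ℚ, q ≠ 0 →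
      ∃ p : MvPolynomial (Fin d) ℝ, p ≠ 0 ∧
        (∀ x ∈ U, (∑ j, (q j : ℝ) * (c j / ℓ j x)) = 0 → MvPolynomial.eval x p = 0) ∧
        interior {x ∈ U | (∑ j, (q j : ℝ) * (c j / ℓ j x)) = 0} = ∅) ∧
    U ⊆ closure {x ∈ U |
      ∀ q : Fin m → ℚ, (∑ j, (q j : ℝ) * (c j / ℓ j x)) = 0 → q = 0} := by
  obtain ⟨x0, hx0⟩ := hUne
  -- the cleared-denominator polynomial
  have key : ∀ q : Fin m → ℚ, q ≠ 0 →
      ∃ p : MvPolynomial (Fin d) ℝ, p ≠ 0 ∧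
        (∀ x ∈ U, (∑ j, (q j : ℝ) * (c j / ℓ j x)) = 0 → MvPolynomial.eval x p = 0) := by
    intro q hq
    set P : MvPolynomial (Fin d) ℝ :=
      ∑ j, C ((q j : ℝ) * c j) * ∏ k ∈ univ.erase j, linPoly (ℓ k) with hP
    have hevalP : ∀ x, MvPolynomial.eval x P =
        ∑ j, (q j : ℝ) * c j * ∏ k ∈ univ.erase j, ℓ k x := by
      intro x
      rw [hP]
      simp only [map_sum, map_mul, MvPolynomial.eval_C, map_prod, eval_linPoly]
    refine ⟨P, ?_, ?_⟩
    · -- P is nonzero: evaluate at a well-chosen point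
      obtain ⟨j0, hj0⟩ := Function.ne_iff.1 hq
      have hv : ℓ j0 x0 ≠ 0 := ne_of_gt (hpos j0 x0 hx0)
      set v := x0
      set μ : Fin m → ((Fin d → ℝ) →ₗ[ℝ] ℝ) :=
        fun k => ℓ k - (ℓ k v / ℓ j0 v) • ℓ j0 with hμ
      have hμne : ∀ k ∈ univ.erase j0, μ k ≠ 0 := by
        intro k hk h0
        have : ℓ k = (ℓ k v / ℓ j0 v) • ℓ j0 := by
          have := sub_eq_zero.1 h0
          exact this
        exact hnonprop k j0 (Finset.mem_erase.1 hk).1 _ this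
      have hQ : (∏ k ∈ univ.erase j0, linPoly (μ k)) ≠ 0 :=
        Finset.prod_ne_zero_iff.2 fun k hk => linPoly_ne_zero (hμne k hk)
      have hx : ∃ x : Fin d → ℝ,
          MvPolynomial.eval x (∏ k ∈ univ.erase j0, linPoly (μ k)) ≠ 0 := by
        by_contra h
        push_neg at h
        exact hQ (MvPolynomial.funext fun y => by simpa using h y)
      obtain ⟨x, hxQ⟩ := hx
      have hμx : ∀ k ∈ univ.erase j0, μ k x ≠ 0 := by
        intro k hk
        rw [map_prod] at hxQ
        simp only [eval_linPoly] at hxQ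
        exact fun h0 => hxQ (Finset.prod_eq_zero hk h0)
      set y := x - (ℓ j0 x / ℓ j0 v) • v with hy
      have hyj0 : ℓ j0 y = 0 := by
        rw [hy]
        simp only [map_sub, map_smul, smul_eq_mul]
        field_simp
        ring
      have hyk : ∀ k ∈ univ.erase j0, ℓ k y = μ k x := by
        intro k hk
        rw [hy, hμ]
        simp only [map_sub, map_smul, smul_eq_mul, LinearMap.sub_apply,
          LinearMap.smul_apply]
        field_simp
      have hyP : MvPolynomial.eval y P ≠ 0 := by
        rw [hevalP]
        rw [Finset.sum_eq_single_of_mem j0 (Finset.mem_univ j0)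
          (fun j _ hj => by
            have : ℓ j0 y = 0 := hyj0
            rw [Finset.prod_eq_zero (Finset.mem_erase.2 ⟨Ne.symm hj, Finset.mem_univ j0⟩) this,
              mul_zero])]
        refine mul_ne_zero (mul_ne_zero ?_ (hc j0)) ?_
        · exact_mod_cast hj0
        · exact Finset.prod_ne_zero_iff.2 fun k hk => (hyk k hk) ▸ hμx k hk
      exact fun h => hyP (by rw [h]; simp)
    · -- vanishing
      intro x hxU hsum
      have hℓne : ∀ k, ℓ k x ≠ 0 := fun k => ne_of_gt (hpos k x hxU)
      rw [hevalP]
      have : ∑ j, (q j : ℝ) * c j * ∏ k ∈ univ.erase j, ℓ k x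
          = (∑ j, (q j : ℝ) * (c j / ℓ j x)) * ∏ k, ℓ k x := by
        rw [Finset.sum_mul]
        refine Finset.sum_congr rfl fun j _ => ?_
        rw [← Finset.mul_prod_erase univ (fun k => ℓ k x) (Finset.mem_univ j)]
        field_simp [hℓne j]
      rw [this, hsum, zero_mul]
  constructor
  · intro q hq
    obtain ⟨p, hp0, hpv⟩ := key q hq
    exact ⟨p, hp0, hpv, interior_zeroSet_empty hp0 fun x hx => hpv x hx.1 hx.2⟩
  · -- density via Baire
    have key' : ∀ q : Fin m → ℚ, ∃ p : MvPolynomial (Fin d) ℝ, q ≠ 0 →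
        p ≠ 0 ∧ (∀ x ∈ U, (∑ j, (q j : ℝ) * (c j / ℓ j x)) = 0 →
          MvPolynomial.eval x p = 0) := by
      intro q
      by_cases hq : q = 0
      · exact ⟨1, fun h => absurd hq h⟩
      · obtain ⟨p, h1, h2⟩ := key q hq
        exact ⟨p, fun _ => ⟨h1, h2⟩⟩
    choose P hPp using key'
    set W : (Fin m → ℚ) → Set (Fin d → ℝ) :=
      fun q => {x | q ≠ 0 → MvPolynomial.eval x (P q) ≠ 0} with hW
    have hWopen : ∀ q, IsOpen (W q) := by
      intro q
      by_cases hq : q = 0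
      · have : W q = Set.univ := by
          ext x; simp [hW, hq]
        rw [this]; exact isOpen_univ
      · have : W q = {x | MvPolynomial.eval x (P q) ≠ 0} := by
          ext x; simp [hW, hq]
        rw [this]
        exact isOpen_compl_singleton.preimage (MvPolynomial.continuous_eval (P q))
    have hWdense : ∀ q, Dense (W q) := by
      intro q
      by_cases hq : q = 0
      · have : W q = Set.univ := by
          ext x; simp [hW, hq]
        rw [this]; exact dense_univ
      · have hsub : W q = {x | MvPolynomial.eval x (P q) = 0}ᶜ := by
          ext x; simp [hW, hq]
        rw [hsub, ← interior_eq_empty_iff_dense_compl]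
        exact interior_zeroSet_empty ((hPp q hq).1) fun x hx => hx
    have hR : Dense (⋂ q, W q) := dense_iInter_of_isOpen hWopen hWdense
    have hsub : U ∩ (⋂ q, W q) ⊆ {x ∈ U |
        ∀ q : Fin m → ℚ, (∑ j, (q j : ℝ) * (c j / ℓ j x)) = 0 → q = 0} := by
      rintro x ⟨hxU, hxR⟩
      refine ⟨hxU, fun q hq => ?_⟩
      by_contra hq0
      have hx : MvPolynomial.eval x (P q) ≠ 0 :=
        (Set.mem_iInter.1 hxR q) hq0
      exact hx ((hPp q hq0).2 x hxU hq)
    exact (hR.open_subset_closure_inter hUopen).trans (closure_mono hsub)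
end
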